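/- Let d ≥ 1, let v : ℝ^d → ℝ^d be Lipschitz continuous with Lipschitz constant K, and let Δt > 0 satisfy Δt·K < 1. Define the flow map γ(x) = x + Δt·v(x). Then for every Borel set E ⊆ ℝ^d one has volume(γ⁻¹(E)) ≤ (1 − Δt·K)^{−d} · volume(E); in particular γ satisfies the hypothesis volume(γ⁻¹(E)) ≤ C · volume(E) with C = (1 − Δt·K)^{−d}. -/
import Mathlib


open MeasureTheory Module
open scoped NNReal ENNReal

theorem stmt7 (d : ℕ) (hd : 1 ≤ d)
    (v : EuclideanSpace ℝ (Fin d) → EuclideanSpace ℝ (Fin d))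
    (K : NNReal) (hv : LipschitzWith K v)
    (Δt : ℝ) (hΔt : 0 < Δt) (hΔtK : Δt * (K : ℝ) < 1)
    (γ : EuclideanSpace ℝ (Fin d) → EuclideanSpace ℝ (Fin d))
    (hγ : ∀ x, γ x = x + Δt • v x) :
    ∀ E : Set (EuclideanSpace ℝ (Fin d)), MeasurableSet E →
      volume (γ ⁻¹' E) ≤ ENNReal.ofReal ((1 - Δt * (K : ℝ))⁻¹ ^ d) * volume E := by
  intro E hE
  -- Lipschitz constant of x ↦ Δt • v x
  set Kg : ℝ≥0 := Δt.toNNReal * K with hKg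
  have hKgR : (Kg : ℝ) = Δt * K := by
    simp [hKg, NNReal.coe_mul, Real.coe_toNNReal _ hΔt.le]
  have hg : LipschitzWith Kg (fun x => Δt • v x) := by
    refine LipschitzWith.of_dist_le_mul fun x y => ?_
    rw [dist_smul₀, hKgR, Real.norm_eq_abs, abs_of_pos hΔt, mul_assoc]
    exact mul_le_mul_of_nonneg_left (hv.dist_le_mul x y) hΔt.le
  have hKg1 : Kg < 1 := by
    rw [← NNReal.coe_lt_coe, hKgR]; simpa using hΔtK
  -- γ is antilipschitz
  have hanti : AntilipschitzWith (1 - Kg)⁻¹ γ := by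
    have h := (AntilipschitzWith.id (α := EuclideanSpace ℝ (Fin d))).add_lipschitzWith hg
      (by simpa using hKg1)
    simp only [inv_one] at h
    have : γ = fun x => id x + Δt • v x := funext fun x => by simp [hγ x]
    rw [this]; exact h
  -- Hausdorff measure comparison
  have hH := hanti.hausdorffMeasure_preimage_le (d := (d : ℝ)) (by positivity) E
  -- μH[d] = c • volume on X
  have hfin : Module.finrank ℝ (EuclideanSpace ℝ (Fin d)) = d := finrank_euclideanSpace_fin
  have hHaar : Measure.IsAddHaarMeasure
      (μH[(d : ℝ)] : Measure (EuclideanSpace ℝ (Fin d))) := by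
    have h := isAddHaarMeasure_hausdorffMeasure (E := EuclideanSpace ℝ (Fin d))
    rwa [hfin] at h
  have hcpos : 0 < Measure.addHaarScalarFactor (μH[(d : ℝ)] : Measure (EuclideanSpace ℝ (Fin d))) volume :=
    Measure.addHaarScalarFactor_pos_of_isAddHaarMeasure _ _
  have hsmul : (μH[(d : ℝ)] : Measure (EuclideanSpace ℝ (Fin d))) =
      Measure.addHaarScalarFactor (μH[(d : ℝ)] : Measure (EuclideanSpace ℝ (Fin d))) volume • volume :=
    Measure.isAddLeftInvariant_eq_smul _ _
  set c : ℝ≥0 := Measure.addHaarScalarFactor (μH[(d : ℝ)] : Measure (EuclideanSpace ℝ (Fin d))) volume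
  have hHv : ∀ s : Set (EuclideanSpace ℝ (Fin d)), (μH[(d : ℝ)] : Measure (EuclideanSpace ℝ (Fin d))) s = (c : ℝ≥0∞) * volume s := by
    intro s; rw [hsmul]; simp
  rw [hHv, hHv] at hH
  -- cancel c
  have hc0 : (c : ℝ≥0∞) ≠ 0 := by exact_mod_cast hcpos.ne'
  have hctop : (c : ℝ≥0∞) ≠ ⊤ := ENNReal.coe_ne_top
  have hcancel : volume (γ ⁻¹' E) ≤ ((1 - Kg)⁻¹ : ℝ≥0) ^ (d : ℝ) * volume E := by
    rw [← ENNReal.mul_le_mul_iff_right hc0 hctop]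
    calc (c : ℝ≥0∞) * volume (γ ⁻¹' E)
        ≤ ((1 - Kg)⁻¹ : ℝ≥0) ^ (d : ℝ) * ((c : ℝ≥0∞) * volume E) := hH
      _ = (c : ℝ≥0∞) * (((1 - Kg)⁻¹ : ℝ≥0) ^ (d : ℝ) * volume E) := by ring
  refine hcancel.trans (le_of_eq ?_)
  congr 1
  rw [ENNReal.rpow_natCast]
  have h1 : ((1 - Kg : ℝ≥0) : ℝ) = 1 - Δt * K := by
    rw [NNReal.coe_sub hKg1.le, hKgR]; simp
  rw [ENNReal.ofReal, ← ENNReal.coe_pow]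
  congr 1
  ext
  have hr : (0:ℝ) < 1 - Δt * K := by linarith
  rw [NNReal.coe_pow, NNReal.coe_inv, h1, Real.coe_toNNReal]
  positivity
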